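/- arXiv:math/0606276 — 2 statements merged into one kernel-verified Lean document; each statement's English description precedes it below -/
import Mathlib

section
/- For real β with 0 < β < 1 and real k·t > 0 and a ∈ ℝ, the improper integral ∫₀^∞ x^{β−1} sin(2π k t (a + x)) dx converges and equals Γ(β)·(2π k t)^{−β}·sin(2π a k t + πβ/2). -/
/-!
Writing `x ^ (β - 1) = Γ(1 - β)⁻¹ ∫₀^∞ u ^ (-β) e^(-u x) du` and exchanging the order of
integration turns `∫₀^B x ^ (β - 1) sin (θ + x) dx` into a `u`-integral of the elementary Laplace
integrals `∫₀^B e^(-u x) sin (θ + x) dx`. These are bounded by `2 (u + 1) / (u ^ 2 + 1)`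
uniformly in `B`, so dominated convergence lets `B → ∞` and leaves
`∫₀^∞ u ^ (-β) (u sin θ + cos θ) / (u ^ 2 + 1) du`. That integral follows from
`∫₀^∞ v ^ (s - 1) / (v ^ 2 + 1) dv = π / (2 sin (π s / 2))`, a second application of Fubini, now
to `v ^ (s - 1) e^(-(v ^ 2 + 1) w)`, and the reflection formula `Γ(β) Γ(1 - β) = π / sin (π β)`
assembles the result. The substitution `y = c x` reduces the frequency `c = 2 π k t` to `1`.
-/

open Real Filter MeasureTheory Set Topology

theorem abs_mul_sin_add_cos_le {u : ℝ} (hu : 0 ≤ u) (y : ℝ) : |u * sin y + cos y| ≤ u + 1 :=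
  calc |u * sin y + cos y| ≤ |u * sin y| + |cos y| := abs_add_le _ _
    _ ≤ u * 1 + 1 := by
      rw [abs_mul, abs_of_nonneg hu]
      gcongr
      exacts [abs_sin_le_one y, abs_cos_le_one y]
    _ = u + 1 := by ring

theorem integral_exp_neg_mul_mul_sin_add (u θ B : ℝ) :
    ∫ x in (0:ℝ)..B, exp (-(u * x)) * sin (θ + x) =
      (u * sin θ + cos θ - exp (-(u * B)) * (u * sin (θ + B) + cos (θ + B))) / (u ^ 2 + 1) := by
  have hderiv : ∀ x, HasDerivAt
      (fun x => -(exp (-(u * x)) * (u * sin (θ + x) + cos (θ + x))) / (u ^ 2 + 1))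
      (exp (-(u * x)) * sin (θ + x)) x := by
    intro x
    have hlin : HasDerivAt (fun x : ℝ => θ + x) 1 x := (hasDerivAt_id x).const_add θ
    have hexp : HasDerivAt (fun x : ℝ => exp (-(u * x))) (exp (-(u * x)) * -(u * 1)) x :=
      ((hasDerivAt_id x).const_mul u).neg.exp
    refine ((hexp.mul ((hlin.sin.const_mul u).add hlin.cos)).neg.div_const _).congr_deriv ?_
    simp only [Pi.add_apply]
    field_simp
    ring
  rw [intervalIntegral.integral_eq_sub_of_hasDerivAt (fun x _ => hderiv x)
    (by apply Continuous.intervalIntegrable; fun_prop)]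
  simp only [mul_zero, neg_zero, exp_zero, add_zero]
  ring

theorem integral_rpow_neg_mul_exp_neg_mul {β x : ℝ} (hβ : β < 1) (hx : 0 < x) :
    ∫ u in Ioi (0:ℝ), u ^ (-β) * exp (-(u * x)) = Gamma (1 - β) * x ^ (β - 1) := by
  have h := integral_rpow_mul_exp_neg_mul_Ioi (a := 1 - β) (sub_pos.mpr hβ) hx
  simp only [sub_sub_cancel_left, mul_comm x] at h
  rw [h, one_div, inv_rpow hx.le, ← rpow_neg hx.le, neg_sub, mul_comm]

theorem integrable_rpow_neg_mul_exp_neg_mul_prod {β B : ℝ} (hβ : 0 < β) (hβ1 : β < 1) :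
    Integrable (fun p : ℝ × ℝ => p.2 ^ (-β) * exp (-(p.2 * p.1)))
      ((volume.restrict (Ioc 0 B)).prod (volume.restrict (Ioi 0))) := by
  rw [integrable_prod_iff (by fun_prop)]
  constructor
  · filter_upwards [ae_restrict_mem measurableSet_Ioc] with x hx
    refine (integrableOn_rpow_mul_exp_neg_mul_rpow (p := 1) (s := -β) (by linarith) one_pos
      hx.1).congr_fun (fun u _ => ?_) measurableSet_Ioi
    simp only [rpow_one, neg_mul, mul_comm u x]
  · have hrpow : IntegrableOn (fun x : ℝ => Gamma (1 - β) * x ^ (β - 1)) (Ioc 0 B) :=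
      (intervalIntegral.intervalIntegrable_rpow' (by linarith)).1.const_mul _
    refine hrpow.congr_fun (fun x hx => ?_) measurableSet_Ioc
    dsimp only
    rw [← integral_rpow_neg_mul_exp_neg_mul hβ1 hx.1]
    refine setIntegral_congr_fun measurableSet_Ioi fun u hu => ?_
    exact (norm_of_nonneg (by have : (0:ℝ) < u := hu; positivity)).symm

theorem integral_rpow_mul_eq_integral_integral_exp_mul {β B C : ℝ} {g : ℝ → ℝ}
    (hβ : 0 < β) (hβ1 : β < 1) (hB : 0 ≤ B) (hg : Measurable g) (hgC : ∀ x, |g x| ≤ C) :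
    ∫ x in (0:ℝ)..B, x ^ (β - 1) * g x =
      (Gamma (1 - β))⁻¹ *
        ∫ u in Ioi (0:ℝ), u ^ (-β) * ∫ x in (0:ℝ)..B, exp (-(u * x)) * g x := by
  have hΓ : Gamma (1 - β) ≠ 0 := (Gamma_pos_of_pos (by linarith)).ne'
  have hint : Integrable (fun p : ℝ × ℝ => p.2 ^ (-β) * exp (-(p.2 * p.1)) * g p.1)
      ((volume.restrict (uIoc 0 B)).prod (volume.restrict (Ioi 0))) := by
    rw [uIoc_of_le hB]
    exact (integrable_rpow_neg_mul_exp_neg_mul_prod hβ hβ1).mul_bdd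
      (hg.comp measurable_fst).aestronglyMeasurable
      (Eventually.of_forall fun p => (Real.norm_eq_abs _).trans_le (hgC p.1))
  calc ∫ x in (0:ℝ)..B, x ^ (β - 1) * g x
      = ∫ x in (0:ℝ)..B, (Gamma (1 - β))⁻¹ *
          ∫ u in Ioi (0:ℝ), u ^ (-β) * exp (-(u * x)) * g x := by
        refine intervalIntegral.integral_congr_ae (Eventually.of_forall fun x hx => ?_)
        rw [uIoc_of_le hB] at hx
        rw [integral_mul_const, integral_rpow_neg_mul_exp_neg_mul hβ1 hx.1]
        field_simp
    _ = (Gamma (1 - β))⁻¹ * ∫ u in Ioi (0:ℝ), ∫ x in (0:ℝ)..B,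
          u ^ (-β) * exp (-(u * x)) * g x := by
        rw [intervalIntegral.integral_const_mul, intervalIntegral_integral_swap hint]
    _ = _ := by simp only [mul_assoc, intervalIntegral.integral_const_mul]

theorem integrableOn_rpow_div_sq_add_one {s : ℝ} (hs : 0 < s) (hs2 : s < 2) :
    IntegrableOn (fun v : ℝ => v ^ (s - 1) / (v ^ 2 + 1)) (Ioi 0) := by
  have hmeas : Measurable fun v : ℝ => v ^ (s - 1) / (v ^ 2 + 1) := by fun_prop
  rw [← Ioc_union_Ioi_eq_Ioi zero_le_one]
  refine IntegrableOn.union ?_ ?_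
  · refine (intervalIntegral.intervalIntegrable_rpow' (r := s - 1) (by linarith)).1.mono'
      hmeas.aestronglyMeasurable ?_
    filter_upwards [ae_restrict_mem measurableSet_Ioc] with v hv
    have hv0 := hv.1
    rw [norm_of_nonneg (by positivity)]
    exact div_le_self (by positivity) (le_add_of_nonneg_left (sq_nonneg v))
  · refine (integrableOn_Ioi_rpow_of_lt (a := s - 3) (by linarith) one_pos).mono'
      hmeas.aestronglyMeasurable ?_
    filter_upwards [ae_restrict_mem measurableSet_Ioi] with v (hv : 1 < v)
    have hv0 : 0 < v := one_pos.trans hv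
    rw [norm_of_nonneg (by positivity), show s - 3 = (s - 1) - 2 by ring,
      rpow_sub hv0 (s - 1) 2, rpow_two]
    gcongr
    linarith

theorem integral_exp_neg_mul_Ioi_zero {b : ℝ} (hb : 0 < b) :
    ∫ w in Ioi (0:ℝ), exp (-b * w) = b⁻¹ := by
  rw [integral_exp_mul_Ioi (neg_neg_iff_pos.mpr hb), mul_zero, exp_zero, neg_div_neg_eq, one_div]

theorem integrable_rpow_mul_exp_neg_sq_add_one_mul {s : ℝ} (hs : 0 < s) (hs2 : s < 2) :
    Integrable (fun p : ℝ × ℝ => p.1 ^ (s - 1) * exp (-(p.1 ^ 2 + 1) * p.2))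
      ((volume.restrict (Ioi 0)).prod (volume.restrict (Ioi 0))) := by
  rw [integrable_prod_iff (by fun_prop)]
  constructor
  · filter_upwards [ae_restrict_mem measurableSet_Ioi] with v hv
    exact (exp_neg_integrableOn_Ioi 0 (by positivity)).const_mul (v ^ (s - 1))
  · refine (integrableOn_rpow_div_sq_add_one hs hs2).congr_fun (fun v (hv : 0 < v) => ?_)
      measurableSet_Ioi
    simp only [norm_of_nonneg (by positivity : 0 ≤ v ^ (s - 1) * exp _)]
    rw [integral_const_mul, integral_exp_neg_mul_Ioi_zero (by positivity), div_eq_mul_inv]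

theorem integral_rpow_div_sq_add_one {s : ℝ} (hs : 0 < s) (hs2 : s < 2) :
    ∫ v in Ioi (0:ℝ), v ^ (s - 1) / (v ^ 2 + 1) = π / (2 * sin (π * s / 2)) := by
  have hinner_w : ∀ v ∈ Ioi (0:ℝ),
      ∫ w in Ioi (0:ℝ), v ^ (s - 1) * exp (-(v ^ 2 + 1) * w) = v ^ (s - 1) / (v ^ 2 + 1) :=
    fun v _ => by
      rw [integral_const_mul, integral_exp_neg_mul_Ioi_zero (by positivity), div_eq_mul_inv]
  have hinner_v : ∀ w ∈ Ioi (0:ℝ),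
      ∫ v in Ioi (0:ℝ), v ^ (s - 1) * exp (-(v ^ 2 + 1) * w) =
        2⁻¹ * Gamma (s / 2) * (w ^ ((1 - s / 2) - 1) * exp (-(1 * w))) :=
      fun w (hw : 0 < w) => by
    have h := integral_rpow_mul_exp_neg_mul_rpow two_pos (by linarith : -1 < s - 1) hw
    simp only [sub_add_cancel, rpow_two] at h
    calc ∫ v in Ioi (0:ℝ), v ^ (s - 1) * exp (-(v ^ 2 + 1) * w)
        = ∫ v in Ioi (0:ℝ), exp (-w) * (v ^ (s - 1) * exp (-w * v ^ 2)) := by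
          refine setIntegral_congr_fun measurableSet_Ioi fun v _ => ?_
          rw [← mul_left_comm, ← exp_add]
          ring_nf
      _ = _ := by
          rw [integral_const_mul, h, show -s / 2 = (1 - s / 2) - 1 by ring, one_mul]
          ring
  rw [← setIntegral_congr_fun measurableSet_Ioi hinner_w,
    integral_integral_swap (integrable_rpow_mul_exp_neg_sq_add_one_mul hs hs2),
    setIntegral_congr_fun measurableSet_Ioi hinner_v, integral_const_mul,
    integral_rpow_mul_exp_neg_mul_Ioi (by linarith) one_pos, one_div_one, one_rpow, one_mul,
    mul_assoc, Gamma_mul_Gamma_one_sub, show π * (s / 2) = π * s / 2 by ring]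
  ring

theorem rpow_neg_mul_mul_add_div_sq_add_one {β u : ℝ} (hu : 0 < u) (p q : ℝ) :
    u ^ (-β) * ((u * p + q) / (u ^ 2 + 1)) =
      p * (u ^ ((2 - β) - 1) / (u ^ 2 + 1)) + q * (u ^ ((1 - β) - 1) / (u ^ 2 + 1)) := by
  rw [show (2 - β) - 1 = 1 + -β by ring, rpow_add hu, rpow_one, show (1 - β) - 1 = -β by ring]
  ring

theorem integrableOn_rpow_neg_mul_mul_add_div_sq_add_one {β : ℝ} (hβ : 0 < β) (hβ1 : β < 1)
    (p q : ℝ) : IntegrableOn (fun u : ℝ => u ^ (-β) * ((u * p + q) / (u ^ 2 + 1))) (Ioi 0) := by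
  refine IntegrableOn.congr_fun
    (((integrableOn_rpow_div_sq_add_one (s := 2 - β) (by linarith) (by linarith)).const_mul p).add
      ((integrableOn_rpow_div_sq_add_one (s := 1 - β) (by linarith) (by linarith)).const_mul q))
    (fun u hu => ?_) measurableSet_Ioi
  exact (rpow_neg_mul_mul_add_div_sq_add_one hu p q).symm

theorem integral_rpow_neg_mul_mul_add_div_sq_add_one {β : ℝ} (hβ : 0 < β) (hβ1 : β < 1)
    (p q : ℝ) : ∫ u in Ioi (0:ℝ), u ^ (-β) * ((u * p + q) / (u ^ 2 + 1)) =
      p * (π / (2 * sin (π * β / 2))) + q * (π / (2 * cos (π * β / 2))) := by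
  rw [setIntegral_congr_fun measurableSet_Ioi
      fun u hu => rpow_neg_mul_mul_add_div_sq_add_one hu p q,
    integral_add ((integrableOn_rpow_div_sq_add_one (by linarith) (by linarith)).const_mul p)
      ((integrableOn_rpow_div_sq_add_one (by linarith) (by linarith)).const_mul q),
    integral_const_mul, integral_const_mul,
    integral_rpow_div_sq_add_one (by linarith) (by linarith),
    integral_rpow_div_sq_add_one (by linarith) (by linarith),
    show π * (2 - β) / 2 = π - π * β / 2 by ring, sin_pi_sub,
    show π * (1 - β) / 2 = π / 2 - π * β / 2 by ring, sin_pi_div_two_sub]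

theorem tendsto_integral_rpow_neg_mul_integral_exp_neg_mul_mul_sin_add {β : ℝ} (hβ : 0 < β)
    (hβ1 : β < 1) (θ : ℝ) :
    Tendsto (fun B : ℝ => ∫ u in Ioi (0:ℝ), u ^ (-β) *
        ∫ x in (0:ℝ)..B, exp (-(u * x)) * sin (θ + x)) atTop
      (𝓝 (∫ u in Ioi (0:ℝ), u ^ (-β) * ((u * sin θ + cos θ) / (u ^ 2 + 1)))) := by
  simp only [integral_exp_neg_mul_mul_sin_add]
  refine tendsto_integral_filter_of_dominated_convergence
    (fun u => u ^ (-β) * ((u * 2 + 2) / (u ^ 2 + 1)))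
    (Eventually.of_forall fun B => (by fun_prop : Measurable _).aestronglyMeasurable) ?_
    (integrableOn_rpow_neg_mul_mul_add_div_sq_add_one hβ hβ1 2 2) ?_
  · filter_upwards [eventually_ge_atTop 0] with B hB
    filter_upwards [ae_restrict_mem measurableSet_Ioi] with u (hu : 0 < u)
    have hexp : exp (-(u * B)) ≤ 1 := exp_le_one_iff.mpr (by nlinarith)
    rw [norm_mul, norm_of_nonneg (rpow_nonneg hu.le _), norm_div,
      norm_of_nonneg (by positivity : 0 ≤ u ^ 2 + 1)]
    gcongr
    calc ‖u * sin θ + cos θ - exp (-(u * B)) * (u * sin (θ + B) + cos (θ + B))‖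
        ≤ |u * sin θ + cos θ| + |exp (-(u * B)) * (u * sin (θ + B) + cos (θ + B))| :=
          abs_sub _ _
      _ = |u * sin θ + cos θ| + exp (-(u * B)) * |u * sin (θ + B) + cos (θ + B)| := by
          rw [abs_mul, abs_of_pos (exp_pos _)]
      _ ≤ (u + 1) + 1 * (u + 1) := by
          gcongr
          exacts [abs_mul_sin_add_cos_le hu.le θ, abs_mul_sin_add_cos_le hu.le (θ + B)]
      _ = u * 2 + 2 := by ring
  · filter_upwards [ae_restrict_mem measurableSet_Ioi] with u (hu : 0 < u)
    have hdecay : Tendsto (fun B => exp (-(u * B))) atTop (𝓝 0) :=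
      tendsto_exp_neg_atTop_nhds_zero.comp (tendsto_id.const_mul_atTop hu)
    have hvanish : Tendsto (fun B => exp (-(u * B)) * (u * sin (θ + B) + cos (θ + B)))
        atTop (𝓝 0) :=
      hdecay.zero_mul_isBoundedUnder_le (isBoundedUnder_of ⟨u + 1, fun B =>
        (Real.norm_eq_abs _).trans_le (abs_mul_sin_add_cos_le hu.le (θ + B))⟩)
    simpa using ((tendsto_const_nhds.sub hvanish).div_const (u ^ 2 + 1)).const_mul (u ^ (-β))

theorem tendsto_integral_rpow_mul_sin_add {β : ℝ} (hβ : 0 < β) (hβ1 : β < 1) (θ : ℝ) :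
    Tendsto (fun B : ℝ => ∫ x in (0:ℝ)..B, x ^ (β - 1) * sin (θ + x)) atTop
      (𝓝 (Gamma β * sin (θ + π * β / 2))) := by
  have hsin : 0 < sin (π * β / 2) :=
    sin_pos_of_pos_of_lt_pi (by positivity) (by nlinarith [pi_pos])
  have hcos : 0 < cos (π * β / 2) :=
    cos_pos_of_mem_Ioo ⟨by nlinarith [pi_pos], by nlinarith [pi_pos]⟩
  have hreflection :
      (Gamma (1 - β))⁻¹ = Gamma β * (2 * sin (π * β / 2) * cos (π * β / 2)) / π := by
    have h := Gamma_mul_Gamma_one_sub β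
    rw [show π * β = 2 * (π * β / 2) by ring, sin_two_mul] at h
    have hΓ : Gamma (1 - β) ≠ 0 := (Gamma_pos_of_pos (by linarith)).ne'
    have hX : 2 * sin (π * β / 2) * cos (π * β / 2) ≠ 0 := by positivity
    generalize 2 * sin (π * β / 2) * cos (π * β / 2) = X at h hX ⊢
    rw [← (eq_div_iff hX).mp h]
    field_simp
  have hfubini : (fun B : ℝ => ∫ x in (0:ℝ)..B, x ^ (β - 1) * sin (θ + x)) =ᶠ[atTop]
      fun B => (Gamma (1 - β))⁻¹ *
        ∫ u in Ioi (0:ℝ), u ^ (-β) * ∫ x in (0:ℝ)..B, exp (-(u * x)) * sin (θ + x) := by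
    filter_upwards [eventually_ge_atTop 0] with B hB
    exact integral_rpow_mul_eq_integral_integral_exp_mul hβ hβ1 hB (by fun_prop)
      fun x => abs_sin_le_one (θ + x)
  convert ((tendsto_integral_rpow_neg_mul_integral_exp_neg_mul_mul_sin_add hβ hβ1 θ).const_mul
    (Gamma (1 - β))⁻¹).congr' hfubini.symm using 2
  rw [integral_rpow_neg_mul_mul_add_div_sq_add_one hβ hβ1, hreflection, sin_add]
  field_simp

theorem integral_rpow_mul_sin_mul_add {β c a B : ℝ} (hc : 0 < c) (hB : 0 ≤ B) :
    ∫ x in (0:ℝ)..B, x ^ (β - 1) * sin (c * (a + x)) =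
      c ^ (-β) * ∫ y in (0:ℝ)..c * B, y ^ (β - 1) * sin (c * a + y) := by
  have hscale := intervalIntegral.integral_comp_mul_left
    (fun y => y ^ (β - 1) * sin (c * a + y)) hc.ne' (a := 0) (b := B)
  rw [mul_zero, smul_eq_mul] at hscale
  calc ∫ x in (0:ℝ)..B, x ^ (β - 1) * sin (c * (a + x))
      = c ^ (1 - β) * ∫ x in (0:ℝ)..B, (c * x) ^ (β - 1) * sin (c * a + c * x) := by
        rw [← intervalIntegral.integral_const_mul]
        refine intervalIntegral.integral_congr fun x hx => ?_
        rw [uIcc_of_le hB] at hx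
        rw [mul_rpow hc.le hx.1, mul_add, ← mul_assoc, ← mul_assoc, ← rpow_add hc,
          show 1 - β + (β - 1) = 0 by ring, rpow_zero, one_mul]
    _ = c ^ (-β) * ∫ y in (0:ℝ)..c * B, y ^ (β - 1) * sin (c * a + y) := by
        rw [hscale, ← mul_assoc, ← rpow_neg_one, ← rpow_add hc, show 1 - β + -1 = -β by ring]

theorem improper_integral_power_sine (β k t a : ℝ) (hβ : 0 < β) (hβ1 : β < 1)
    (hkt : 0 < k * t) :
    Filter.Tendsto (fun B : ℝ => ∫ x in (0:ℝ)..B, x ^ (β - 1) * Real.sin (2 * π * k * t * (a + x)))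
      Filter.atTop
      (nhds (Real.Gamma β * (2 * π * k * t) ^ (-β) * Real.sin (2 * π * a * k * t + π * β / 2))) := by
  set c := 2 * π * k * t with hc_def
  have hc : 0 < c := by rw [hc_def, mul_assoc]; exact mul_pos two_pi_pos hkt
  have hlim := ((tendsto_integral_rpow_mul_sin_add hβ hβ1 (c * a)).comp
    (tendsto_id.const_mul_atTop hc)).const_mul (c ^ (-β))
  rw [show 2 * π * a * k * t = c * a by rw [hc_def]; ring, mul_right_comm, mul_comm]
  refine hlim.congr' ?_
  filter_upwards [eventually_ge_atTop 0] with B hB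
  exact (integral_rpow_mul_sin_mul_add hc hB).symm
end

section
/- Let f : [a₁, a₂] → ℝ with f(x) behaving like d·|x − a|^α near a boundary point a (i.e. f(x) = ∑_{j≥1} d_j |x−a|^{αj} with d₁ ≠ 0, 0 < α ≤ 1/2, convergent power series in |x−a|^α). With x and u connected by u = f'(x)/(x f'(x) − f(x)) and h(u) = −u/f'(x), one has h(u) ≍ |x − a|^{1−α} and h'(u) ≍ |x − a|^{−α} as x → a; consequently h(u)·h'(u) ≍ |x − a|^{1−2α} stays bounded as x → a. -/
/-!
Write `f x = F ((x - a) ^ α)` with `F` analytic at `0`, `F 0 = 0` and `F' 0 = d₁ ≠ 0`. Then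
`h = -1 / D` with `D x = x f' x - f x`, and since `D' = x f''` the quotient rule gives
`dh/dx = x f'' / D²` and `du/dx = -f f'' / D²`, so `h' = -x / f` wherever `f'' ≠ 0`.
As `x → a⁺`, with `t = x - a`:
`f ~ d₁ t ^ α`, `f' ~ d₁ α t ^ (α - 1)`, `D ~ a d₁ α t ^ (α - 1)` (the term `f` is of lower order)
and `f'' ~ d₁ α (α - 1) t ^ (α - 2)`, which is nonzero because `α ≠ 1`.
Hence `h ≍ t ^ (1 - α)`, `h' ≍ t ^ (-α)` and `h h' ≍ t ^ (1 - 2α)`.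
-/

open Set Filter Topology Asymptotics FormalMultilinearSeries

theorem Asymptotics.IsTheta.eventually_bounds {ι E E' : Type*} [SeminormedAddCommGroup E]
    [SeminormedAddCommGroup E'] {l : Filter ι} {u : ι → E} {v : ι → E'} (h : u =Θ[l] v) :
    ∀ᶠ C in atTop, ∀ᶠ x in l, C⁻¹ * ‖v x‖ ≤ ‖u x‖ ∧ ‖u x‖ ≤ C * ‖v x‖ := by
  filter_upwards [isBigO_iff_eventually.1 h.1, isBigO_iff_eventually.1 h.2,
    eventually_gt_atTop 0] with C hu hv hC
  filter_upwards [hu, hv] with x hux hvx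
  exact ⟨(inv_mul_le_iff₀ hC).2 hvx, hux⟩

theorem Asymptotics.IsEquivalent.eventually_ne_zero {ι β : Type*} [NormedAddCommGroup β]
    {l : Filter ι} {u v : ι → β} (h : u ~[l] v) (hv : ∀ᶠ x in l, v x ≠ 0) : ∀ᶠ x in l, u x ≠ 0 := by
  filter_upwards [h.isTheta.eq_zero_iff, hv] with x hx hvx
  rwa [Ne, hx]

theorem HasDerivAt.isEquivalent_const_mul {𝕜 : Type*} [NontriviallyNormedField 𝕜] {F : 𝕜 → 𝕜}
    {d : 𝕜} (hF : HasDerivAt F d 0) (hF0 : F 0 = 0) (hd : d ≠ 0) : F ~[𝓝 0] fun s => d * s := by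
  have ho : (fun s => F s - d * s) =o[𝓝 0] fun s => s := by
    simpa [hF0, mul_comm d] using hF.isLittleO
  exact ho.trans_isTheta ((isTheta_const_mul_left hd).2 (isTheta_refl _ _)).symm

theorem IsOpen.eventually_eventually_nhds_of_nhdsWithin {X : Type*} [TopologicalSpace X]
    {s : Set X} {a : X} {p : X → Prop} (hs : IsOpen s) (h : ∀ᶠ x in 𝓝[s] a, p x) :
    ∀ᶠ x in 𝓝[s] a, ∀ᶠ y in 𝓝 x, p y := by
  filter_upwards [eventually_eventually_nhdsWithin.2 h, self_mem_nhdsWithin] with x hx hxs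
  rwa [hs.nhdsWithin_eq hxs] at hx

section SubRpow

variable {a : ℝ}

theorem isEquivalent_self_nhdsGT (ha : a ≠ 0) : (fun x : ℝ => x) ~[𝓝[>] a] fun _ => a :=
  (isEquivalent_const_iff_tendsto ha).2 (tendsto_id.mono_left nhdsWithin_le_nhds)

theorem tendsto_sub_rpow_nhdsGT {α : ℝ} (hα : 0 < α) :
    Tendsto (fun x => (x - a) ^ α) (𝓝[>] a) (𝓝 0) := by
  have h : ContinuousAt (fun x => (x - a) ^ α) a :=
    (continuousAt_id.sub continuousAt_const).rpow_const (Or.inr hα.le)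
  simpa [Real.zero_rpow hα.ne'] using h.tendsto.mono_left nhdsWithin_le_nhds

theorem isLittleO_sub_rpow {β γ : ℝ} (h : β < γ) :
    (fun x => (x - a) ^ γ) =o[𝓝[>] a] fun x => (x - a) ^ β := by
  have h0 : (fun x => (x - a) ^ (γ - β)) =o[𝓝[>] a] fun _ => (1 : ℝ) :=
    (isLittleO_one_iff ℝ).2 (tendsto_sub_rpow_nhdsGT (sub_pos.2 h))
  refine (h0.mul_isBigO (isBigO_refl (fun x => (x - a) ^ β) _)).congr' ?_ (by simp)
  filter_upwards [self_mem_nhdsWithin] with x hx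
  rw [← Real.rpow_add (sub_pos.2 hx), sub_add_cancel]

theorem eventually_const_mul_sub_rpow_ne_zero {c p : ℝ} (hc : c ≠ 0) :
    ∀ᶠ x in 𝓝[>] a, c * (x - a) ^ p ≠ 0 := by
  filter_upwards [self_mem_nhdsWithin] with x hx
  exact mul_ne_zero hc (Real.rpow_pos_of_pos (sub_pos.2 hx) p).ne'

theorem isTheta_div_const_mul_sub_rpow {c C p : ℝ} (hc : c ≠ 0) (hC : C ≠ 0) :
    (fun x => c / (C * (x - a) ^ p)) =Θ[𝓝[>] a] fun x => (x - a) ^ (-p) := by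
  refine EventuallyEq.trans_isTheta ?_
    ((isTheta_const_mul_left (div_ne_zero hc hC)).2 isTheta_rfl)
  filter_upwards [self_mem_nhdsWithin] with x hx
  rw [Real.rpow_neg (sub_pos.2 hx).le]
  field_simp

theorem tendsto_comp_sub_rpow {G : ℝ → ℝ} {α : ℝ} (hG : ContinuousAt G 0) (hα : 0 < α) :
    Tendsto (fun x => G ((x - a) ^ α)) (𝓝[>] a) (𝓝 (G 0)) :=
  hG.tendsto.comp (tendsto_sub_rpow_nhdsGT hα)

theorem hasDerivAt_sub_rpow {x p : ℝ} (hx : a < x) :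
    HasDerivAt (fun y => (y - a) ^ p) (p * (x - a) ^ (p - 1)) x :=
  (((hasDerivAt_id' x).sub_const a).rpow_const (Or.inl (sub_pos.2 hx).ne')).congr_deriv (by ring)

theorem hasDerivAt_comp_sub_rpow {F : ℝ → ℝ} {α F' x : ℝ} (hx : a < x)
    (hF : HasDerivAt F F' ((x - a) ^ α)) :
    HasDerivAt (fun y => F ((y - a) ^ α)) (F' * (α * (x - a) ^ (α - 1))) x :=
  hF.comp x (hasDerivAt_sub_rpow hx)

end SubRpow

theorem hasFPowerSeriesAt_ofScalarsSum {𝕜 : Type*} [NontriviallyNormedField 𝕜] [CompleteSpace 𝕜]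
    {c : ℕ → 𝕜} {s₀ : 𝕜} (hs₀ : s₀ ≠ 0) (h : Summable fun n => c n * s₀ ^ n) :
    HasFPowerSeriesAt (ofScalarsSum (E := 𝕜) c) (ofScalars 𝕜 c) 0 := by
  have hr : (‖s₀‖₊ : ENNReal) ≤ (ofScalars 𝕜 c).radius :=
    (ofScalars 𝕜 c).le_radius_of_tendsto (l := 0) <| by
      simpa [ofScalars_norm, ← norm_pow, ← norm_mul] using h.tendsto_atTop_zero.norm
  exact ((ofScalars 𝕜 c).hasFPowerSeriesOnBall
    (lt_of_lt_of_le (by simpa using hs₀) hr)).hasFPowerSeriesAt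

theorem exists_analyticAt_eq_comp_rpow {α a δ₀ : ℝ} {f : ℝ → ℝ} {d : ℕ → ℝ} (hδ₀ : 0 < δ₀)
    (hf : ∀ x ∈ Ioo a (a + δ₀),
      HasSum (fun j : ℕ => d (j + 1) * |x - a| ^ (α * (j + 1))) (f x)) :
    ∃ F : ℝ → ℝ, AnalyticAt ℝ F 0 ∧ F 0 = 0 ∧ deriv F 0 = d 1 ∧
      ∀ x ∈ Ioo a (a + δ₀), f x = F ((x - a) ^ α) := by
  set c : ℕ → ℝ := fun n => if n = 0 then 0 else d n
  have hsum : ∀ x ∈ Ioo a (a + δ₀), HasSum (fun n => c n * ((x - a) ^ α) ^ n) (f x) := by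
    intro x hx
    have hxa : 0 ≤ x - a := (sub_pos.2 hx.1).le
    have hterm : ∀ j : ℕ,
        d (j + 1) * |x - a| ^ (α * (j + 1)) = c (j + 1) * ((x - a) ^ α) ^ (j + 1) := by
      intro j
      rw [abs_of_nonneg hxa, Real.rpow_mul hxa, ← Real.rpow_natCast]
      simp [c]
    rw [← hasSum_nat_add_iff' 1]
    simpa [hterm, c] using hf x hx
  have hx₀ : a + δ₀ / 2 ∈ Ioo a (a + δ₀) := ⟨by linarith, by linarith⟩
  have hF := hasFPowerSeriesAt_ofScalarsSum
    (Real.rpow_pos_of_pos (by linarith : (0:ℝ) < a + δ₀ / 2 - a) α).ne' (hsum _ hx₀).summable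
  refine ⟨ofScalarsSum c, hF.analyticAt, by simp [c], ?_, fun x hx => ?_⟩
  · simp [hF.deriv, c]
  · simp [ofScalars_sum_eq, (hsum x hx).tsum_eq]

/-- In the paper `u = polarU f x`, `h(u) = polarH f x` and `h'(u) = dh/du = polarH' f x`, the
derivative being taken through the parametrisation by `x`. -/
noncomputable def polarU (f : ℝ → ℝ) (x : ℝ) : ℝ := deriv f x / (x * deriv f x - f x)

noncomputable def polarH (f : ℝ → ℝ) (x : ℝ) : ℝ := -polarU f x / deriv f x

noncomputable def polarH' (f : ℝ → ℝ) (x : ℝ) : ℝ := deriv (polarH f) x / deriv (polarU f) x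

section Polar

variable {f g : ℝ → ℝ} {x : ℝ}

theorem polarH_eq (hf : deriv f x ≠ 0) : polarH f x = -(x * deriv f x - f x)⁻¹ := by
  rw [polarH, polarU, neg_div, div_div, mul_comm, ← div_div, div_self hf, one_div]

theorem Filter.EventuallyEq.polarU (h : f =ᶠ[𝓝 x] g) : polarU f =ᶠ[𝓝 x] polarU g := by
  filter_upwards [h, h.deriv] with y hy hy'
  simp only [_root_.polarU, hy, hy']

theorem Filter.EventuallyEq.polarH (h : f =ᶠ[𝓝 x] g) : polarH f =ᶠ[𝓝 x] polarH g := by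
  filter_upwards [h.polarU, h.deriv] with y hy hy'
  simp only [_root_.polarH, hy, hy']

theorem Filter.EventuallyEq.polarH'_eq (h : f =ᶠ[𝓝 x] g) : polarH' f x = polarH' g x := by
  rw [polarH', polarH', h.polarH.deriv_eq, h.polarU.deriv_eq]

theorem polarH'_eq_neg_div (hf : DifferentiableAt ℝ f x) (hf' : DifferentiableAt ℝ (deriv f) x)
    (hf'_ne : ∀ᶠ y in 𝓝 x, deriv f y ≠ 0) (hD : x * deriv f x - f x ≠ 0)
    (hf'' : deriv (deriv f) x ≠ 0) : polarH' f x = -x / f x := by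
  have hDer : HasDerivAt (fun y => y * deriv f y - f y) (x * deriv (deriv f) x) x :=
    (((hasDerivAt_id x).mul hf'.hasDerivAt).sub hf.hasDerivAt).congr_deriv (by simp)
  have hU : HasDerivAt (polarU f)
      (-(f x * deriv (deriv f) x) / (x * deriv f x - f x) ^ 2) x :=
    (hf'.hasDerivAt.div hDer hD).congr_deriv (by ring)
  have hH : HasDerivAt (polarH f) (x * deriv (deriv f) x / (x * deriv f x - f x) ^ 2) x :=
    ((hDer.inv hD).neg.congr_deriv (by ring)).congr_of_eventuallyEq
      (hf'_ne.mono fun y hy => polarH_eq hy)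
  rw [polarH', hH.deriv, hU.deriv]
  field_simp
end Polar

section Composite

variable {F : ℝ → ℝ} {a α : ℝ}

theorem eventually_analyticAt_comp_sub_rpow (hF : AnalyticAt ℝ F 0) (hα : 0 < α) :
    ∀ᶠ x in 𝓝[>] a, ∀ᶠ y in 𝓝 x, a < y ∧ AnalyticAt ℝ F ((y - a) ^ α) :=
  isOpen_Ioi.eventually_eventually_nhds_of_nhdsWithin <|
    (eventually_mem_nhdsWithin (s := Ioi a)).and <|
    (tendsto_sub_rpow_nhdsGT hα).eventually hF.eventually_analyticAt

theorem eventually_deriv_comp_sub_rpow (hF : AnalyticAt ℝ F 0) (hα : 0 < α) :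
    ∀ᶠ x in 𝓝[>] a, deriv (fun y => F ((y - a) ^ α)) =ᶠ[𝓝 x]
      fun y => deriv F ((y - a) ^ α) * (α * (y - a) ^ (α - 1)) :=
  (eventually_analyticAt_comp_sub_rpow hF hα).mono fun _ hx => hx.mono fun _ hy =>
    (hasDerivAt_comp_sub_rpow hy.1 hy.2.differentiableAt.hasDerivAt).deriv

theorem eventually_hasDerivAt_deriv_comp_sub_rpow (hF : AnalyticAt ℝ F 0) (hα : 0 < α) :
    ∀ᶠ x in 𝓝[>] a, HasDerivAt (deriv fun y => F ((y - a) ^ α))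
      (deriv (deriv F) ((x - a) ^ α) * (α * (x - a) ^ (α - 1)) * (α * (x - a) ^ (α - 1)) +
        deriv F ((x - a) ^ α) * (α * ((α - 1) * (x - a) ^ (α - 1 - 1)))) x := by
  filter_upwards [eventually_analyticAt_comp_sub_rpow hF hα,
    eventually_deriv_comp_sub_rpow hF hα] with x hx hderiv
  obtain ⟨hax, hFx⟩ := hx.self_of_nhds
  exact ((hasDerivAt_comp_sub_rpow hax hFx.deriv.differentiableAt.hasDerivAt).mul
    ((hasDerivAt_sub_rpow hax).const_mul α)).congr_of_eventuallyEq hderiv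

variable (a) in
theorem isEquivalent_comp_sub_rpow {d : ℝ} (hF : HasDerivAt F d 0) (hF0 : F 0 = 0) (hd : d ≠ 0)
    (hα : 0 < α) : (fun x => F ((x - a) ^ α)) ~[𝓝[>] a] fun x => d * (x - a) ^ α :=
  (hF.isEquivalent_const_mul hF0 hd).comp_tendsto (tendsto_sub_rpow_nhdsGT hα)

theorem isEquivalent_deriv_comp_sub_rpow (hF : AnalyticAt ℝ F 0) (hd : deriv F 0 ≠ 0)
    (hα : 0 < α) :
    deriv (fun x => F ((x - a) ^ α)) ~[𝓝[>] a] fun x => deriv F 0 * α * (x - a) ^ (α - 1) := by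
  have hlim : (fun x => deriv F ((x - a) ^ α)) ~[𝓝[>] a] fun _ => deriv F 0 :=
    (isEquivalent_const_iff_tendsto hd).2 (tendsto_comp_sub_rpow hF.deriv.continuousAt hα)
  refine ((hlim.mul (IsEquivalent.refl (u := fun x => α * (x - a) ^ (α - 1)))).congr_left
    ?_).congr_right (.of_eq (by ext; simp only [Pi.mul_apply]; ring))
  filter_upwards [eventually_deriv_comp_sub_rpow hF hα] with x hx
  exact hx.self_of_nhds.symm

theorem isEquivalent_deriv_deriv_comp_sub_rpow (hF : AnalyticAt ℝ F 0) (hd : deriv F 0 ≠ 0)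
    (hα : 0 < α) (hα1 : α ≠ 1) :
    deriv (deriv fun x => F ((x - a) ^ α)) ~[𝓝[>] a]
      fun x => deriv F 0 * α * (α - 1) * (x - a) ^ (α - 2) := by
  have hC : deriv F 0 * α * (α - 1) ≠ 0 := by simp [hd, hα.ne', sub_ne_zero.2 hα1]
  have hlim : (fun x => deriv F ((x - a) ^ α)) ~[𝓝[>] a] fun _ => deriv F 0 :=
    (isEquivalent_const_iff_tendsto hd).2 (tendsto_comp_sub_rpow hF.deriv.continuousAt hα)
  have hmain : (fun x => deriv F ((x - a) ^ α) * (α * ((α - 1) * (x - a) ^ (α - 1 - 1))))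
      ~[𝓝[>] a] fun x => deriv F 0 * α * (α - 1) * (x - a) ^ (α - 2) :=
    (hlim.mul (IsEquivalent.refl (u := fun x => α * ((α - 1) * (x - a) ^ (α - 1 - 1))))).congr_right
      (.of_eq (by ext; simp only [Pi.mul_apply]; ring_nf))
  have hsmall : (fun x => deriv (deriv F) ((x - a) ^ α) * (α * (x - a) ^ (α - 1)) *
      (α * (x - a) ^ (α - 1))) =o[𝓝[>] a] fun x => deriv F 0 * α * (α - 1) * (x - a) ^ (α - 2) := by
    have hO := (tendsto_comp_sub_rpow (a := a) hF.deriv.deriv.continuousAt hα).isBigO_one ℝ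
    have ho := ((isLittleO_sub_rpow (a := a) (show α - 2 < 2 * α - 2 by linarith)).const_mul_left
      (α * α)).const_mul_right hC
    refine (hO.mul_isLittleO ho).congr' ?_ (.of_eq (by ext; ring))
    filter_upwards [self_mem_nhdsWithin] with x hx
    rw [show 2 * α - 2 = (α - 1) + (α - 1) by ring, Real.rpow_add (sub_pos.2 hx)]
    ring
  refine (hsmall.add_isEquivalent hmain).congr_left ?_
  filter_upwards [eventually_hasDerivAt_deriv_comp_sub_rpow hF hα] with x hx
  exact hx.deriv.symm

theorem isEquivalent_mul_deriv_sub_comp_sub_rpow (hF : AnalyticAt ℝ F 0) (hF0 : F 0 = 0)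
    (hd : deriv F 0 ≠ 0) (ha : a ≠ 0) (hα : 0 < α) :
    (fun x => x * deriv (fun y => F ((y - a) ^ α)) x - F ((x - a) ^ α)) ~[𝓝[>] a]
      fun x => a * deriv F 0 * α * (x - a) ^ (α - 1) := by
  have ho : (fun x => F ((x - a) ^ α)) =o[𝓝[>] a]
      fun x => a * deriv F 0 * α * (x - a) ^ (α - 1) :=
    (isEquivalent_comp_sub_rpow a hF.differentiableAt.hasDerivAt hF0 hd hα).trans_isLittleO
      (((isLittleO_sub_rpow (sub_one_lt α)).const_mul_left _).const_mul_right
        (by simp [ha, hd, hα.ne']))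
  have hmul := (isEquivalent_self_nhdsGT ha).mul (isEquivalent_deriv_comp_sub_rpow hF hd hα)
  refine (hmul.sub_isLittleO ?_).congr_right (.of_eq (by ext; simp only [Pi.mul_apply]; ring))
  exact ho.congr_right fun x => by simp only [Pi.mul_apply]; ring

theorem isTheta_polarH_comp_sub_rpow (hF : AnalyticAt ℝ F 0) (hF0 : F 0 = 0)
    (hd : deriv F 0 ≠ 0) (ha : a ≠ 0) (hα : 0 < α) :
    polarH (fun x => F ((x - a) ^ α)) =Θ[𝓝[>] a] fun x => (x - a) ^ (1 - α) := by
  have hH : polarH (fun x => F ((x - a) ^ α)) =ᶠ[𝓝[>] a]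
      fun x => -1 / (x * deriv (fun y => F ((y - a) ^ α)) x - F ((x - a) ^ α)) := by
    filter_upwards [(isEquivalent_deriv_comp_sub_rpow hF hd hα).eventually_ne_zero
      (eventually_const_mul_sub_rpow_ne_zero (by simp [hd, hα.ne']))] with x hx
    rw [polarH_eq hx, neg_div, one_div]
  have hΘ := isTheta_div_const_mul_sub_rpow (a := a) (p := α - 1) (neg_ne_zero.2 one_ne_zero)
    (show a * deriv F 0 * α ≠ 0 by simp [ha, hd, hα.ne'])
  rw [neg_sub] at hΘ
  exact hH.trans_isTheta ((IsEquivalent.refl.div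
    (isEquivalent_mul_deriv_sub_comp_sub_rpow hF hF0 hd ha hα)).isTheta.trans hΘ)

theorem isTheta_polarH'_comp_sub_rpow (hF : AnalyticAt ℝ F 0) (hF0 : F 0 = 0)
    (hd : deriv F 0 ≠ 0) (ha : a ≠ 0) (hα : 0 < α) (hα1 : α ≠ 1) :
    polarH' (fun x => F ((x - a) ^ α)) =Θ[𝓝[>] a] fun x => (x - a) ^ (-α) := by
  have hH' : polarH' (fun x => F ((x - a) ^ α)) =ᶠ[𝓝[>] a] fun x => -x / F ((x - a) ^ α) := by
    filter_upwards [eventually_analyticAt_comp_sub_rpow hF hα,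
      eventually_hasDerivAt_deriv_comp_sub_rpow hF hα,
      isOpen_Ioi.eventually_eventually_nhds_of_nhdsWithin
        ((isEquivalent_deriv_comp_sub_rpow hF hd hα).eventually_ne_zero
          (eventually_const_mul_sub_rpow_ne_zero (by simp [hd, hα.ne']))),
      (isEquivalent_mul_deriv_sub_comp_sub_rpow hF hF0 hd ha hα).eventually_ne_zero
        (eventually_const_mul_sub_rpow_ne_zero (by simp [ha, hd, hα.ne'])),
      (isEquivalent_deriv_deriv_comp_sub_rpow hF hd hα hα1).eventually_ne_zero
        (eventually_const_mul_sub_rpow_ne_zero (by simp [hd, hα.ne', sub_ne_zero.2 hα1]))]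
      with x hx hderiv hne hD hderiv2
    obtain ⟨hax, hFx⟩ := hx.self_of_nhds
    have hg := hasDerivAt_comp_sub_rpow hax hFx.differentiableAt.hasDerivAt
    exact polarH'_eq_neg_div hg.differentiableAt hderiv.differentiableAt hne hD hderiv2
  exact hH'.trans_isTheta (((isEquivalent_self_nhdsGT ha).neg.div
    (isEquivalent_comp_sub_rpow a hF.differentiableAt.hasDerivAt hF0 hd hα)).isTheta.trans
    (isTheta_div_const_mul_sub_rpow (neg_ne_zero.2 ha) hd))

end Composite

theorem polar_profile_product_bounded (α a : ℝ) (hα : 0 < α) (hα' : α ≤ 1/2) (ha : a ≠ 0)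
    (f : ℝ → ℝ) (d : ℕ → ℝ) (hd : d 1 ≠ 0) (δ₀ : ℝ) (hδ₀ : 0 < δ₀)
    (hf : ∀ x ∈ Set.Ioo a (a + δ₀),
      HasSum (fun j : ℕ => d (j + 1) * |x - a| ^ (α * (j + 1))) (f x)) :
    ∃ δ c C : ℝ, 0 < δ ∧ 0 < c ∧ 0 < C ∧ ∀ x ∈ Set.Ioo a (a + δ),
      (let U : ℝ → ℝ := fun x => deriv f x / (x * deriv f x - f x)
       let h : ℝ → ℝ := fun x => -U x / deriv f x
       let h' : ℝ → ℝ := fun x => deriv h x / deriv U x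
       (c * |x - a| ^ (1 - α) ≤ |h x| ∧ |h x| ≤ C * |x - a| ^ (1 - α)) ∧
       (c * |x - a| ^ (-α) ≤ |h' x| ∧ |h' x| ≤ C * |x - a| ^ (-α)) ∧
       (c * |x - a| ^ (1 - 2 * α) ≤ |h x * h' x| ∧
        |h x * h' x| ≤ C * |x - a| ^ (1 - 2 * α))) := by
  obtain ⟨F, hF, hF0, hF'0, hfF⟩ := exists_analyticAt_eq_comp_rpow hδ₀ hf
  have hd' : deriv F 0 ≠ 0 := hF'0 ▸ hd
  have hgerm : ∀ᶠ x in 𝓝[>] a, f =ᶠ[𝓝 x] fun y => F ((y - a) ^ α) :=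
    isOpen_Ioi.eventually_eventually_nhds_of_nhdsWithin
      (eventually_of_mem (Ioo_mem_nhdsGT (by linarith)) hfF)
  have hH : polarH f =Θ[𝓝[>] a] fun x => (x - a) ^ (1 - α) :=
    EventuallyEq.trans_isTheta (hgerm.mono fun _ hx => hx.polarH.self_of_nhds)
      (isTheta_polarH_comp_sub_rpow hF hF0 hd' ha hα)
  have hH' : polarH' f =Θ[𝓝[>] a] fun x => (x - a) ^ (-α) :=
    EventuallyEq.trans_isTheta (hgerm.mono fun _ hx => hx.polarH'_eq)
      (isTheta_polarH'_comp_sub_rpow hF hF0 hd' ha hα (by linarith))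
  have hHH' : (fun x => polarH f x * polarH' f x) =Θ[𝓝[>] a] fun x => (x - a) ^ (1 - 2 * α) := by
    refine (hH.mul hH').trans_eventuallyEq ?_
    filter_upwards [self_mem_nhdsWithin] with x hx
    rw [← Real.rpow_add (sub_pos.2 hx)]
    ring_nf
  obtain ⟨C, ⟨hb₁, hb₂, hb₃⟩, hC⟩ := ((hH.eventually_bounds.and
    (hH'.eventually_bounds.and hHH'.eventually_bounds)).and (eventually_gt_atTop 0)).exists
  obtain ⟨b, hab, hsub⟩ := mem_nhdsGT_iff_exists_Ioo_subset.1 (hb₁.and (hb₂.and hb₃))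
  refine ⟨b - a, C⁻¹, C, sub_pos.2 hab, inv_pos.2 hC, hC, fun x hx => ?_⟩
  rw [add_sub_cancel] at hx
  have hbx := hsub hx
  simp only [mem_ofPred_eq, Real.norm_eq_abs, Real.abs_rpow_of_nonneg (sub_pos.2 hx.1).le] at hbx
  exact hbx
end
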